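/- (Approximation guarantee under spectral equivalence.) Let c₁, c₂ > 0 and let S ∈ ℝ^{n×n} be symmetric with (1/c₁)·⟨L_n^{1/2} x, x⟩ ≤ ⟨S x, x⟩ ≤ c₂·⟨L_n^{1/2} x, x⟩ for all x ∈ ℝⁿ. Let X_C ∈ ℝ^{n×2} have rows √(2/n)·(cos(2πj/n), sin(2πj/n)), j = 1,…,n. Then Tr(X_Cᵀ S X_C) ≤ 4 c₂ sin(π/n), and for every X ∈ ℝ^{n×2} with Xᵀ X = I₂ and Xᵀ 𝟏ₙ = 0 one has Tr(X_Cᵀ S X_C) ≤ c₁ c₂ · Tr(Xᵀ S X). -/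

import Mathlib

/-!
Up to the factor `√(2/n)`, the columns of `circEmb n` are the real and imaginary parts of the
character `j ↦ exp (2πij/n)`, hence eigenvectors of `L_n` for `(2 sin (π/n))²` and of `L_n^{1/2}`
for `2 sin (π/n)`; as their squared norms add up to `2`, the upper spectral bound gives the first
claim.

For the second, the discrete Fourier transform diagonalises `L_n` with eigenvalues
`(2 sin (πk/n))²`, so an eigenvector of `L_n` for an eigenvalue below `(2 sin (π/n))²` has its
Fourier transform supported at `0` and is constant. Every eigenvector of `L_n^{1/2}` for an
eigenvalue below `2 sin (π/n)` is such an eigenvector of `L_n`, hence orthogonal to `𝟏^⊥`; so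
`L_n^{1/2} ≥ 2 sin (π/n)` on `𝟏^⊥`, which gives `Tr (Xᵀ L_n^{1/2} X) ≥ 4 sin (π/n)` for the
admissible `X`, and the lower spectral bound finishes.
-/

open Real Matrix

noncomputable section

/-- The Laplacian of the `n`-cycle. -/
def cycLap (n : ℕ) : Matrix (ZMod n) (ZMod n) ℝ :=
  Matrix.of fun i j => if i = j then 2 else if i = j + 1 ∨ j = i + 1 then -1 else 0

/-- The circular embedding: rows `(X_C)_{j,·} = √(2/n)·(cos(2πj/n), sin(2πj/n))`. -/
def circEmb (n : ℕ) : Matrix (ZMod n) (Fin 2) ℝ :=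
  Matrix.of fun j t =>
    Real.sqrt (2 / (n : ℝ)) *
      (if t = 0 then Real.cos (2 * π * (j.val : ℝ) / n)
       else Real.sin (2 * π * (j.val : ℝ) / n))

/-- The positive semidefinite square root of a positive semidefinite matrix
(the definition `Matrix.PosSemidef.sqrt` of the older Mathlib, since removed). -/
def Matrix.PosSemidef.sqrt {m : Type*} [Fintype m] [DecidableEq m]
    {A : Matrix m m ℝ} (hA : A.PosSemidef) : Matrix m m ℝ :=
  hA.1.eigenvectorUnitary.1 * diagonal ((↑) ∘ (Real.sqrt ∘ hA.1.eigenvalues)) *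
    (star hA.1.eigenvectorUnitary : Matrix m m ℝ)

namespace Matrix

variable {m p : Type*} [Fintype m] [Fintype p]

theorem trace_transpose_mul_mul (A : Matrix m m ℝ) (X : Matrix m p ℝ) :
    (Xᵀ * A * X).trace = ∑ t, (A *ᵥ Xᵀ t) ⬝ᵥ Xᵀ t := by
  refine Finset.sum_congr rfl fun t _ ↦ ?_
  rw [diag_apply, Matrix.mul_assoc, mul_apply, dotProduct_comm]
  simp [dotProduct, mulVec, mul_apply]

theorem trace_transpose_mul_mul_le {A B : Matrix m m ℝ} {a b : ℝ}
    (h : ∀ x, a * ((A *ᵥ x) ⬝ᵥ x) ≤ b * ((B *ᵥ x) ⬝ᵥ x)) (X : Matrix m p ℝ) :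
    a * (Xᵀ * A * X).trace ≤ b * (Xᵀ * B * X).trace := by
  simp only [trace_transpose_mul_mul, Finset.mul_sum]
  exact Finset.sum_le_sum fun t _ ↦ h _

theorem PosSemidef.mulVec_eq_smul_of_mul_self_mulVec {B : Matrix m m ℝ} (hB : B.PosSemidef)
    {μ : ℝ} (hμ : 0 ≤ μ) {v : m → ℝ} (hv : (B * B) *ᵥ v = μ ^ 2 • v) : B *ᵥ v = μ • v := by
  have hBt : Bᵀ = B := by rw [← conjTranspose_eq_transpose_of_trivial]; exact hB.1
  rcases hμ.eq_or_lt with rfl | hpos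
  · have : (B *ᵥ v) ⬝ᵥ (B *ᵥ v) = 0 := by
      rw [dotProduct_mulVec, ← mulVec_transpose, hBt, mulVec_mulVec, hv]; simp
    simpa using dotProduct_self_eq_zero.1 this
  · set w := B *ᵥ v - μ • v
    have hBw : B *ᵥ w = -μ • w := by
      simp only [w, mulVec_sub, mulVec_smul, mulVec_mulVec, hv, smul_sub, smul_smul]
      module
    have hnonneg : 0 ≤ w ⬝ᵥ (B *ᵥ w) := by simpa using hB.dotProduct_mulVec_nonneg w
    rw [hBw, dotProduct_smul, smul_eq_mul] at hnonneg
    have hw0 : 0 ≤ w ⬝ᵥ w := by simpa using dotProduct_star_self_nonneg w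
    have hw : w ⬝ᵥ w = 0 := by nlinarith
    exact sub_eq_zero.1 (dotProduct_self_eq_zero.1 hw)

variable [DecidableEq m]

theorem IsHermitian.mul_dotProduct_self_le_mulVec_dotProduct {M : Matrix m m ℝ}
    (hM : M.IsHermitian) {c : ℝ} {x : m → ℝ} (h : ∀ i, hM.eigenvalues i < c → ⇑(hM.eigenvectorBasis i) ⬝ᵥ x = 0) :
    c * (x ⬝ᵥ x) ≤ (M *ᵥ x) ⬝ᵥ x := by
  set b := hM.eigenvectorBasis
  have parseval : ∀ y z : m → ℝ, ∑ i, (y ⬝ᵥ b i) * (b i ⬝ᵥ z) = y ⬝ᵥ z := fun y z ↦ by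
    simpa [EuclideanSpace.inner_eq_star_dotProduct, dotProduct_comm] using
      b.sum_inner_mul_inner (WithLp.toLp 2 y) (WithLp.toLp 2 z)
  have hMb : ∀ i, (M *ᵥ x) ⬝ᵥ b i = hM.eigenvalues i * (b i ⬝ᵥ x) := fun i ↦ by
    rw [dotProduct_comm, dotProduct_mulVec, ← mulVec_transpose,
      ← conjTranspose_eq_transpose_of_trivial, hM.eq, hM.mulVec_eigenvectorBasis,
      smul_dotProduct, smul_eq_mul]
  rw [← parseval, ← parseval, Finset.mul_sum]
  refine Finset.sum_le_sum fun i _ ↦ ?_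
  rw [hMb, dotProduct_comm x]
  rcases lt_or_ge (hM.eigenvalues i) c with hlt | hge
  · simp [h i hlt]
  · nlinarith [mul_self_nonneg (b i ⬝ᵥ x)]

theorem PosSemidef.posSemidef_sqrt {A : Matrix m m ℝ} (hA : A.PosSemidef) :
    hA.sqrt.PosSemidef :=
  (PosSemidef.diagonal fun _ ↦ Real.sqrt_nonneg _).mul_mul_conjTranspose_same _

theorem PosSemidef.sqrt_mul_self {A : Matrix m m ℝ} (hA : A.PosSemidef) :
    hA.sqrt * hA.sqrt = A := by
  set U : Matrix m m ℝ := (hA.1.eigenvectorUnitary : Matrix m m ℝ)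
  have hUU : star U * U = 1 := Unitary.star_mul_self_of_mem hA.1.eigenvectorUnitary.2
  conv_rhs => rw [hA.1.spectral_theorem, Unitary.conjStarAlgAut_apply]
  calc hA.sqrt * hA.sqrt
      = U * (diagonal (Real.sqrt ∘ hA.1.eigenvalues) * (star U * U) *
          diagonal (Real.sqrt ∘ hA.1.eigenvalues)) * star U := by
        simp only [PosSemidef.sqrt, Matrix.mul_assoc]; rfl
    _ = _ := by
      rw [hUU, Matrix.mul_one, diagonal_mul_diagonal]
      congr 3
      funext i
      simp [Real.mul_self_sqrt (hA.eigenvalues_nonneg i)]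

end Matrix

theorem Real.sin_pi_div_natCast_nonneg (n : ℕ) : 0 ≤ sin (π / n) := by
  rcases n.eq_zero_or_pos with rfl | hn
  · simp
  · exact sin_nonneg_of_nonneg_of_le_pi (by positivity)
      (div_le_self pi_pos.le (by exact_mod_cast hn))

theorem Real.sin_pi_div_le_sin_pi_mul_div {n m : ℕ} (h1 : 1 ≤ m) (h2 : m + 1 ≤ n) :
    sin (π / n) ≤ sin (π * m / n) := by
  have hn : (0 : ℝ) < n := by exact_mod_cast (show 0 < n by omega)
  have hm1 : (1 : ℝ) ≤ m := by exact_mod_cast h1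
  have hm2 : (m : ℝ) + 1 ≤ n := by exact_mod_cast h2
  have hmem : π * m / n ∈ Set.Icc (π / n) (π - π / n) := by
    constructor
    · gcongr; exact le_mul_of_one_le_right pi_pos.le hm1
    · rw [le_sub_iff_add_le, ← add_div, div_le_iff₀ hn]; nlinarith [pi_pos]
  have hpi_div : π / n ≤ π := div_le_self pi_pos.le (by linarith)
  have := strictConcaveOn_sin_Icc.concaveOn.min_le_of_mem_Icc ⟨by positivity, hpi_div⟩
    ⟨sub_nonneg.2 hpi_div, by linarith [div_nonneg pi_pos.le hn.le]⟩ hmem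
  rwa [sin_pi_sub, min_self] at this

namespace ZMod

variable {N : ℕ} [NeZero N]

theorem natCast_ne_zero_of_lt {a n : ℕ} (ha : 0 < a) (h : a < n) : (a : ZMod n) ≠ 0 := by
  intro h0
  have := congrArg ZMod.val h0
  rw [val_natCast_of_lt h, val_zero] at this
  omega

theorem stdAddChar_eq_exp (k : ZMod N) :
    stdAddChar k = Complex.exp ((2 * π * k.val / N : ℝ) * Complex.I) := by
  rw [stdAddChar_apply, toCircle_apply]
  push_cast; ring_nf

theorem two_sub_stdAddChar_sub_stdAddChar_neg (k : ZMod N) :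
    2 - stdAddChar k - stdAddChar (-k) = ((2 * sin (π * k.val / N)) ^ 2 : ℝ) := by
  rw [sub_sub, AddChar.map_neg_eq_conj, Complex.add_conj, stdAddChar_eq_exp,
    Complex.exp_ofReal_mul_I_re, mul_pow, sin_sq_eq_half_sub]
  push_cast; ring_nf

theorem dft_comp_add_right {E : Type*} [AddCommGroup E] [Module ℂ E] (Φ : ZMod N → E)
    (a k : ZMod N) : 𝓕 (fun j ↦ Φ (j + a)) k = stdAddChar (a * k) • 𝓕 Φ k := by
  simp only [dft_apply, Finset.smul_sum, smul_smul]
  refine Fintype.sum_equiv (Equiv.addRight a) _ _ fun j ↦ ?_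
  simp only [Equiv.coe_addRight, ← AddChar.map_add_eq_mul]
  congr 2; ring

theorem apply_eq_apply_zero_of_dft_eq_zero {E : Type*} [AddCommGroup E] [Module ℂ E]
    {Φ : ZMod N → E} (h : ∀ k ≠ 0, 𝓕 Φ k = 0) (j : ZMod N) : Φ j = Φ 0 := by
  have key : ∀ j, Φ j = (N : ℂ)⁻¹ • 𝓕 Φ 0 := fun j ↦ by
    rw [← LinearEquiv.symm_apply_apply dft Φ, invDFT_apply,
      Finset.sum_eq_single 0 (fun k _ hk ↦ by rw [h k hk, smul_zero]) (by simp)]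
    simp
  rw [key j, key 0]

end ZMod

open ZMod

section CycleLaplacian

variable {n : ℕ} [NeZero n]

theorem cycLap_mulVec (hn : 3 ≤ n) (x : ZMod n → ℝ) (i : ZMod n) :
    (cycLap n *ᵥ x) i = 2 * x i - x (i + 1) - x (i - 1) := by
  have h1 : (1 : ZMod n) ≠ 0 := by exact_mod_cast natCast_ne_zero_of_lt one_pos (by omega)
  have h2 : (2 : ZMod n) ≠ 0 := by exact_mod_cast natCast_ne_zero_of_lt two_pos (by omega)
  have : i + 1 ≠ i := by simpa using h1
  have : i - 1 ≠ i := by simpa using h1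
  have : i + 1 ≠ i - 1 := fun h ↦ h2 (by linear_combination h)
  have entry : ∀ j, cycLap n i j = 2 * (if i = j then 1 else 0) - (if i + 1 = j then 1 else 0)
      - (if i - 1 = j then 1 else 0) := by
    intro j
    simp only [cycLap, of_apply]
    split_ifs <;> grind
  simp only [mulVec, dotProduct, entry, sub_mul, Finset.sum_sub_distrib, mul_assoc, ite_mul,
    one_mul, zero_mul, ← Finset.mul_sum, Finset.sum_ite_eq, Finset.mem_univ, if_true]

theorem dft_cycLap_mulVec (hn : 3 ≤ n) (u : ZMod n → ℝ) (k : ZMod n) :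
    𝓕 (fun j ↦ ((cycLap n *ᵥ u) j : ℂ)) k
      = ((2 * sin (π * k.val / n)) ^ 2 : ℝ) * 𝓕 (fun j ↦ (u j : ℂ)) k := by
  set U : ZMod n → ℂ := fun j ↦ (u j : ℂ)
  have hLU : (fun j ↦ ((cycLap n *ᵥ u) j : ℂ))
      = (2 : ℂ) • U - (fun j ↦ U (j + 1)) - (fun j ↦ U (j + -1)) := by
    ext j; simp [U, cycLap_mulVec hn, sub_eq_add_neg]
  rw [hLU, map_sub, map_sub, _root_.map_smul, Pi.sub_apply, Pi.sub_apply, Pi.smul_apply,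
    dft_comp_add_right, dft_comp_add_right, one_mul, neg_one_mul,
    ← two_sub_stdAddChar_sub_stdAddChar_neg, smul_eq_mul, smul_eq_mul, smul_eq_mul]
  ring

theorem eq_const_of_cycLap_mulVec_eq_smul (hn : 3 ≤ n) {u : ZMod n → ℝ} {ν : ℝ}
    (hu : cycLap n *ᵥ u = ν • u) (hν : ν < (2 * sin (π / n)) ^ 2) (j : ZMod n) :
    u j = u 0 := by
  set U : ZMod n → ℂ := fun j ↦ (u j : ℂ)
  suffices h : ∀ k ≠ 0, 𝓕 U k = 0 from
    Complex.ofReal_injective (apply_eq_apply_zero_of_dft_eq_zero h j)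
  intro k hk
  have hgap : ν < (2 * sin (π * k.val / n)) ^ 2 := by
    have := sin_pi_div_le_sin_pi_mul_div (val_pos.2 hk) (val_lt k)
    have := sin_pi_div_natCast_nonneg n
    nlinarith
  have h := dft_cycLap_mulVec hn u k
  rw [hu, show (fun j ↦ (((ν • u) j : ℝ) : ℂ)) = (ν : ℂ) • U by ext; simp [U], _root_.map_smul,
    Pi.smul_apply, smul_eq_mul, ← sub_eq_zero, ← sub_mul] at h
  exact (mul_eq_zero.1 h).resolve_left (sub_ne_zero.2 (by exact_mod_cast hgap.ne))

theorem cycLap_mulVec_comp_stdAddChar (hn : 3 ≤ n) (ℓ : ℂ →ₗ[ℝ] ℝ) :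
    cycLap n *ᵥ (fun j ↦ ℓ (stdAddChar j))
      = (2 * sin (π / n)) ^ 2 • fun j ↦ ℓ (stdAddChar j) := by
  have : Fact (1 < n) := ⟨by omega⟩
  have hω := two_sub_stdAddChar_sub_stdAddChar_neg (N := n) 1
  rw [val_one, Nat.cast_one, mul_one] at hω
  ext i
  have : (2 : ℝ) • stdAddChar i - stdAddChar (i + 1) - stdAddChar (i - 1)
      = (2 * sin (π / n)) ^ 2 • stdAddChar i := by
    rw [sub_eq_add_neg i, AddChar.map_add_eq_mul, AddChar.map_add_eq_mul, Complex.real_smul,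
      Complex.real_smul, ← hω]
    push_cast
    ring
  rw [cycLap_mulVec hn, Pi.smul_apply, ← ℓ.map_smul, ← this, ℓ.map_sub, ℓ.map_sub, ℓ.map_smul,
    smul_eq_mul]

theorem circEmb_transpose_apply (t : Fin 2) :
    (circEmb n)ᵀ t = Real.sqrt (2 / n) • fun j ↦ Complex.basisOneI.coord t (stdAddChar j) := by
  ext j
  rw [Pi.smul_apply, Module.Basis.coord_apply, Complex.coe_basisOneI_repr, stdAddChar_eq_exp,
    Complex.exp_ofReal_mul_I_re, Complex.exp_ofReal_mul_I_im]
  fin_cases t <;> simp [circEmb]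

theorem sum_dotProduct_circEmb_transpose :
    ∑ t, (circEmb n)ᵀ t ⬝ᵥ (circEmb n)ᵀ t = 2 := by
  have hn : (n : ℝ) ≠ 0 := NeZero.ne _
  have hrow : ∀ j, circEmb n j 0 * circEmb n j 0 + circEmb n j 1 * circEmb n j 1 = 2 / n := by
    intro j
    have := sin_sq_add_cos_sq (2 * π * (j.val : ℝ) / n)
    have hsq := Real.mul_self_sqrt (show 0 ≤ 2 / (n : ℝ) by positivity)
    simp only [circEmb, of_apply, if_true, if_neg (by decide : (1 : Fin 2) ≠ 0)]
    linear_combination (2 / n) * this + (cos (2 * π * (j.val : ℝ) / n) ^ 2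
      + sin (2 * π * (j.val : ℝ) / n) ^ 2) * hsq
  simp only [Fin.sum_univ_two, dotProduct, transpose_apply, ← Finset.sum_add_distrib, hrow,
    Finset.sum_const, Finset.card_univ, ZMod.card, nsmul_eq_mul]
  field_simp

variable (hn : 3 ≤ n) (hL : (cycLap n).PosSemidef)
include hn

theorem sqrt_cycLap_mulVec_circEmb_transpose (t : Fin 2) :
    hL.sqrt *ᵥ (circEmb n)ᵀ t = (2 * sin (π / n)) • (circEmb n)ᵀ t := by
  have hsin := sin_pi_div_natCast_nonneg n
  rw [circEmb_transpose_apply, mulVec_smul, hL.posSemidef_sqrt.mulVec_eq_smul_of_mul_self_mulVec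
    (μ := 2 * sin (π / n)) (by positivity)
    (by rw [hL.sqrt_mul_self]; exact cycLap_mulVec_comp_stdAddChar hn _), smul_comm]

theorem trace_circEmb_sqrt_cycLap :
    ((circEmb n)ᵀ * hL.sqrt * circEmb n).trace = 4 * sin (π / n) := by
  simp only [trace_transpose_mul_mul, sqrt_cycLap_mulVec_circEmb_transpose hn hL, smul_dotProduct,
    smul_eq_mul, ← Finset.mul_sum, sum_dotProduct_circEmb_transpose]
  ring

theorem mul_dotProduct_self_le_sqrt_cycLap {x : ZMod n → ℝ} (hx : ∑ j, x j = 0) :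
    2 * sin (π / n) * (x ⬝ᵥ x) ≤ (hL.sqrt *ᵥ x) ⬝ᵥ x := by
  have hB := hL.posSemidef_sqrt
  refine hB.1.mul_dotProduct_self_le_mulVec_dotProduct fun i hi ↦ ?_
  set b := ⇑(hB.1.eigenvectorBasis i)
  have hLb : cycLap n *ᵥ b = hB.1.eigenvalues i ^ 2 • b :=
    calc cycLap n *ᵥ b = hL.sqrt *ᵥ (hL.sqrt *ᵥ b) := by rw [mulVec_mulVec, hL.sqrt_mul_self]
      _ = _ := by
        rw [hB.1.mulVec_eigenvectorBasis, mulVec_smul, hB.1.mulVec_eigenvectorBasis, smul_smul,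
          sq]
  have hconst := eq_const_of_cycLap_mulVec_eq_smul hn hLb
    (pow_lt_pow_left₀ hi (hB.eigenvalues_nonneg i) two_ne_zero)
  rw [dotProduct, Finset.sum_congr rfl fun j _ ↦ by rw [hconst j], ← Finset.mul_sum, hx,
    mul_zero]

theorem mul_card_le_trace_sqrt_cycLap {p : Type*} [Fintype p] [DecidableEq p]
    (X : Matrix (ZMod n) p ℝ) (hX : Xᵀ * X = 1) (h1 : Xᵀ *ᵥ (fun _ ↦ (1 : ℝ)) = 0) :
    2 * sin (π / n) * Fintype.card p ≤ (Xᵀ * hL.sqrt * X).trace := by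
  have hnorm : ∀ t, Xᵀ t ⬝ᵥ Xᵀ t = 1 := fun t ↦ by
    have := congrFun₂ hX t t
    rwa [mul_apply', one_apply_eq] at this
  have hsum : ∀ t, ∑ j, Xᵀ t j = 0 := fun t ↦ by
    simpa [mulVec, dotProduct] using congrFun h1 t
  calc 2 * sin (π / n) * Fintype.card p = ∑ t, 2 * sin (π / n) * (Xᵀ t ⬝ᵥ Xᵀ t) := by
        simp only [hnorm, mul_one, Finset.sum_const, Finset.card_univ, nsmul_eq_mul]
        ring
    _ ≤ _ := by
      rw [trace_transpose_mul_mul]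
      exact Finset.sum_le_sum fun t _ ↦ mul_dotProduct_self_le_sqrt_cycLap hn hL (hsum t)

end CycleLaplacian

theorem approximation_guarantee_general (n : ℕ) [NeZero n] (hn : 3 ≤ n)
    (hL : (cycLap n).PosSemidef)
    (c₁ c₂ : ℝ) (hc₁ : 0 < c₁) (hc₂ : 0 < c₂)
    (S : Matrix (ZMod n) (ZMod n) ℝ)
    (hlow : ∀ x : ZMod n → ℝ, (1 / c₁) * ((hL.sqrt *ᵥ x) ⬝ᵥ x) ≤ (S *ᵥ x) ⬝ᵥ x)
    (hup : ∀ x : ZMod n → ℝ, (S *ᵥ x) ⬝ᵥ x ≤ c₂ * ((hL.sqrt *ᵥ x) ⬝ᵥ x)) :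
    ((circEmb n)ᵀ * S * circEmb n).trace ≤ 4 * c₂ * Real.sin (π / n) ∧
    (∀ X : Matrix (ZMod n) (Fin 2) ℝ, Xᵀ * X = 1 → Xᵀ *ᵥ (fun _ => (1 : ℝ)) = 0 →
      ((circEmb n)ᵀ * S * circEmb n).trace ≤ c₁ * c₂ * (Xᵀ * S * X).trace) := by
  have hcirc : ((circEmb n)ᵀ * S * circEmb n).trace ≤ 4 * c₂ * sin (π / n) := by
    have := trace_transpose_mul_mul_le (fun x ↦ (one_mul _).trans_le (hup x)) (circEmb n)
    rw [one_mul, trace_circEmb_sqrt_cycLap hn hL] at this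
    linarith
  refine ⟨hcirc, fun X hX h1 ↦ ?_⟩
  have hspec := mul_card_le_trace_sqrt_cycLap hn hL X hX h1
  have hcmp := trace_transpose_mul_mul_le (fun x ↦ (hlow x).trans_eq (one_mul _).symm) X
  rw [one_mul] at hcmp
  rw [Fintype.card_fin] at hspec
  calc ((circEmb n)ᵀ * S * circEmb n).trace ≤ 4 * c₂ * sin (π / n) := hcirc
    _ ≤ c₂ * (Xᵀ * hL.sqrt * X).trace := by push_cast at hspec; nlinarith
    _ = c₁ * c₂ * (1 / c₁ * (Xᵀ * hL.sqrt * X).trace) := by field_simp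
    _ ≤ c₁ * c₂ * (Xᵀ * S * X).trace := by gcongr

/-- Approximation guarantee under spectral equivalence: if `S` is
symmetric and `(1/c₁)·⟨L_n^{1/2} x, x⟩ ≤ ⟨S x, x⟩ ≤ c₂·⟨L_n^{1/2} x, x⟩` for all `x`,
then `Tr(X_Cᵀ S X_C) ≤ 4 c₂ sin(π/n)`, and for every `X` with `Xᵀ X = I₂` and
`Xᵀ 𝟏ₙ = 0` one has `Tr(X_Cᵀ S X_C) ≤ c₁ c₂ · Tr(Xᵀ S X)`. -/
theorem approximation_guarantee (n : ℕ) [NeZero n] (hn : 3 ≤ n)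
    (hL : (cycLap n).PosSemidef)
    (c₁ c₂ : ℝ) (hc₁ : 0 < c₁) (hc₂ : 0 < c₂)
    (S : Matrix (ZMod n) (ZMod n) ℝ) (hSsym : S.IsSymm)
    (hlow : ∀ x : ZMod n → ℝ, (1 / c₁) * ((hL.sqrt *ᵥ x) ⬝ᵥ x) ≤ (S *ᵥ x) ⬝ᵥ x)
    (hup : ∀ x : ZMod n → ℝ, (S *ᵥ x) ⬝ᵥ x ≤ c₂ * ((hL.sqrt *ᵥ x) ⬝ᵥ x)) :
    ((circEmb n)ᵀ * S * circEmb n).trace ≤ 4 * c₂ * Real.sin (π / n) ∧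
    (∀ X : Matrix (ZMod n) (Fin 2) ℝ, Xᵀ * X = 1 → Xᵀ *ᵥ (fun _ => (1 : ℝ)) = 0 →
      ((circEmb n)ᵀ * S * circEmb n).trace ≤ c₁ * c₂ * (Xᵀ * S * X).trace) :=
  approximation_guarantee_general n hn hL c₁ c₂ hc₁ hc₂ S hlow hup
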